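/- arXiv:2604.27659 — 4 statements merged into one kernel-verified Lean document; each statement's English description precedes it below -/
import Mathlib

section
/- Safety with endorsement: if in the abstract protocol a value can only be committed when 2f+1 nodes have locked it, nodes lock a value only if it is properly endorsed, and a locked correct node never prevotes for a different value in a later round unless that value has a quorum certificate from a higher round, then any two committed values at the same height are equal and properly endorsed. -/
/-- Safety with endorsement: commits require `2f+1` precommits, precommits require
locks, locks require quorum certification and proper endorsement, and locked correct
nodes only switch to values quorum-certified in a strictly higher round. Then any two
committed values (at the same height) are equal and properly endorsed. -/
theorem stmt_7 {N V : Type*} [Fintype N]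
    (f : ℕ) (hcard : Fintype.card N = 3 * f + 1)
    (B : Set N) (hB : B.ncard ≤ f)
    (prevote precommit locked : N → ℕ → V → Prop)
    (endorsed : V → Prop)
    (QC : V → ℕ → Prop)
    (hQC : ∀ v r, QC v r ↔ 2 * f + 1 ≤ {p : N | prevote p r v}.ncard)
    (hprelock : ∀ p r v, precommit p r v → locked p r v)
    (hlock : ∀ p r v, locked p r v → QC v r ∧ endorsed v)
    (hone : ∀ p, p ∉ B → ∀ r v v', prevote p r v → prevote p r v' → v = v')
    (hlockprev : ∀ p, p ∉ B → ∀ r v r' v', locked p r v → r < r' → prevote p r' v' →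
      v' = v ∨ ∃ r'', r < r'' ∧ r'' < r' ∧ QC v' r'')
    (r r' : ℕ) (v v' : V) (hrr : r ≤ r')
    (hc : 2 * f + 1 ≤ {p : N | precommit p r v}.ncard)
    (hc' : 2 * f + 1 ≤ {p : N | precommit p r' v'}.ncard) :
    v = v' ∧ endorsed v := by
  -- quorum intersection lemma
  have quorum : ∀ S T : Set N, 2 * f + 1 ≤ S.ncard → 2 * f + 1 ≤ T.ncard →
      ∃ p, p ∈ S ∧ p ∈ T ∧ p ∉ B := by
    intro S T hS hT
    have hSfin : S.Finite := S.toFinite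
    have hTfin : T.Finite := T.toFinite
    have hunion : (S ∪ T).ncard ≤ 3 * f + 1 := by
      have := Set.ncard_le_ncard (Set.subset_univ (S ∪ T)) (Set.finite_univ)
      simpa [Set.ncard_univ, hcard] using this
    have hsum : (S ∪ T).ncard + (S ∩ T).ncard = S.ncard + T.ncard :=
      Set.ncard_union_add_ncard_inter S T hSfin hTfin
    have hint : f + 1 ≤ (S ∩ T).ncard := by omega
    by_contra h
    push_neg at h
    have hsub : S ∩ T ⊆ B := fun p hp => h p hp.1 hp.2
    have := Set.ncard_le_ncard hsub (B.toFinite)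
    omega
  have key : ∀ s, r ≤ s → ∀ w, QC w s → w = v := by
    intro s
    induction s using Nat.strong_induction_on with
    | _ s ih =>
      intro hrs w hqc
      rw [hQC] at hqc
      obtain ⟨p, hpw, hpc, hpB⟩ := quorum _ _ hqc hc
      have hl := hprelock p r v hpc
      rcases eq_or_lt_of_le hrs with heq | hlt
      · have hqv := (hlock p r v hl).1
        rw [hQC] at hqv
        obtain ⟨q, hq1, hq2, hqB⟩ := quorum _ _ hqc hqv
        exact hone q hqB s w v hq1 (heq ▸ hq2)
      · rcases hlockprev p hpB r v s w hl hlt hpw with h | ⟨r'', h1, h2, h3⟩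
        · exact h
        · exact ih r'' h2 h1.le w h3
  obtain ⟨p, hp1, _, _⟩ := quorum _ _ hc' hc'
  have hl' := hlock p r' v' (hprelock p r' v' hp1)
  have hv : v' = v := key r' hrr v' hl'.1
  obtain ⟨q, hq1, _, _⟩ := quorum _ _ hc hc
  exact ⟨hv.symm, (hlock q r v (hprelock q r v hq1)).2⟩
end

section
/- Abstract liveness: assume (1) after some round R*, every round has a correct proposer infinitely often; (2) whenever a correct proposer proposes in a round after R*, its proposal becomes examined; (3) each examined proposal is either properly endorsed or yields a strictly shorter proposal for a later correct proposer; (4) once a properly endorsed quorum-certified proposal exists, any subsequent round with a correct proposer commits. Then some proposal is eventually committed. -/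
/-- Abstract liveness: correct proposers occur infinitely often after `Rstar`; their
proposals are examined; examined proposals are properly endorsed or yield strictly
shorter proposals for later correct proposers; once an examined endorsed proposal
exists, later correct proposers commit. Then some proposal is eventually committed. -/
theorem stmt_11 {Tx : Type*}
    (Rstar : ℕ)
    (correctProposer : ℕ → Prop)
    (proposes examined committed : ℕ → List Tx → Prop)
    (endorsed : List Tx → Prop)
    (hnil : endorsed ([] : List Tx))
    (h1 : ∀ r, ∃ r', r < r' ∧ correctProposer r')
    (hprop : ∀ r, Rstar < r → correctProposer r → ∃ v, proposes r v)
    (h2 : ∀ r, Rstar < r → correctProposer r → ∀ v, proposes r v → examined r v)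
    (h3 : ∀ r v, examined r v → endorsed v ∨
      ∃ r' v', r < r' ∧ Rstar < r' ∧ correctProposer r' ∧ proposes r' v' ∧
        v'.length < v.length)
    (h4 : ∀ r v, examined r v → endorsed v →
      ∀ r', r < r' → correctProposer r' → ∃ v', committed r' v') :
    ∃ r v, committed r v := by
  -- Key lemma: any examined proposal leads to an examined endorsed proposal.
  have key : ∀ n r v, examined r v → v.length ≤ n →
      ∃ r' v', examined r' v' ∧ endorsed v' := by
    intro n
    induction n with
    | zero =>
      intro r v hex hlen
      rcases h3 r v hex with he | ⟨r', v', _, _, _, _, hlt⟩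
      · exact ⟨r, v, hex, he⟩
      · omega
    | succ n ih =>
      intro r v hex hlen
      rcases h3 r v hex with he | ⟨r', v', _, hR, hc, hp, hlt⟩
      · exact ⟨r, v, hex, he⟩
      · exact ih r' v' (h2 r' hR hc v' hp) (by omega)
  -- Get an initial examined proposal.
  obtain ⟨r0, hr0, hc0⟩ := h1 Rstar
  obtain ⟨v0, hp0⟩ := hprop r0 hr0 hc0
  have hex0 := h2 r0 hr0 hc0 v0 hp0
  obtain ⟨r1, v1, hex1, he1⟩ := key v0.length r0 v0 hex0 le_rfl
  obtain ⟨r2, hr2, hc2⟩ := h1 r1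
  obtain ⟨v2, hv2⟩ := h4 r1 v1 hex1 he1 r2 hr2 hc2
  exact ⟨r2, v2, hv2⟩
end

section
/- In the gossip model, if a message m is delivered to some correct node at time s ≥ GST, then every correct node receives m by time s + Δ; consequently, if correct node j sends a prevote for proposal v at time t (having received v), and a different correct node k sends a prevote for a conflicting proposal v' in the same round, then k received v' before time t + Δ (otherwise k would have received v first and detected the conflict), so every correct node detects the conflict between v and v' by time t + 2Δ. -/
/-- Gossip timing: correct node `j` prevotes `v` at the earliest time `t` and forwards
it (so all correct nodes receive `v` by `t+Δ`); correct node `k` prevotes the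
conflicting `v'`, which it received no later than `v`, and forwards `v'` upon
receiving it. Then every correct node has both `v` and `v'` by time `t + 2Δ`. -/
theorem stmt_12 {N P : Type*} (Δ t : ℝ) (hΔ : 0 < Δ)
    (Correct : N → Prop) (recv : N → P → ℝ)
    (j k : N) (hj : Correct j) (hk : Correct k)
    (v v' : P) (hvv : v ≠ v')
    (hforward_j : ∀ p, Correct p → recv p v ≤ t + Δ)
    (hk_first : recv k v' ≤ recv k v)
    (hforward_k : ∀ p, Correct p → recv p v' ≤ recv k v' + Δ) :
    ∀ p, Correct p → recv p v ≤ t + 2 * Δ ∧ recv p v' ≤ t + 2 * Δ := by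
  intro p hp
  constructor
  · have := hforward_j p hp; linarith
  · have h1 := hforward_k p hp
    have h2 := hforward_j k hk
    linarith
end

section
/- If the timer for removal suggestions is set to 2Δ, the earliest correct prevote occurs at time t ≥ GST, correct endorsers of tx send endorsements within Δ of receiving the proposal, and the proposal reaches all correct nodes by t + Δ, then every correct node that waits the full 2Δ timer (started no earlier than t) holds the endorsements of all correct endorsers of tx at expiry; hence if the endorsement policy of tx is satisfiable by correct endorsers alone, no correct node suggests removing tx. -/
/-- Censorship resistance: with a `2Δ` removal timer started at `s ≥ t`, correct
endorsers receiving the proposal by `t + Δ`, sending endorsements immediately, and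
delivery within `Δ`, any correct node holds all correct endorsers' endorsements at
timer expiry; if the policy is satisfied by the correct endorsers alone, the node
does not suggest removing `tx`. -/
theorem stmt_19 {N : Type*} [DecidableEq N] (Δ t : ℝ) (hΔ : 0 < Δ)
    (Correct : N → Prop)
    (Ec : Finset N) (hEc : ∀ e ∈ Ec, Correct e)
    (P : Finset N → Prop)
    (hmono : ∀ S T : Finset N, S ⊆ T → P S → P T)
    (hPEc : P Ec)
    (recvProp : N → ℝ) (recvEnd : N → N → ℝ)
    (hprop : ∀ e ∈ Ec, recvProp e ≤ t + Δ)
    (hend : ∀ p, Correct p → ∀ e ∈ Ec, recvEnd p e ≤ recvProp e + Δ)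
    (p : N) (hp : Correct p) (s : ℝ) (hs : t ≤ s)
    (suggests : Prop)
    (hsugg : suggests →
      ¬ ∃ S : Finset N, (∀ e ∈ S, recvEnd p e ≤ s + 2 * Δ) ∧ P S) :
    ¬ suggests := by
  intro hsug
  exact hsugg hsug ⟨Ec, fun e he => by
    have := hend p hp e he
    have h2 := hprop e he
    nlinarith, hPEc⟩
end
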